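/- Let w > 0, let s ≥ 4 be an even integer, and let γ ⊆ [0,w] be a finite set with exactly s elements. Put v₁ = d*(γ) (so 0 < v₁ ≤ w/(s−1)), v₂ = (2w − s·v₁)/(s−2), and γ̃_{v₁} = {⌊i/2⌋·v₁ + (⌈i/2⌉ − 1)·v₂ : i = 1,…,s}. Then d*(γ̃_{v₁}) ≥ d*(γ) and d⁺(γ̃_{v₁}) ≥ d⁺(γ); that is, every size-s subset of [0,w] is dominated in both d* and d⁺ by a member of the family {γ̃_{v₁} : 0 < v₁ ≤ w/(s−1)}. -/

import Mathlib

open scoped BigOperators Classical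

/-- A standard interleaved lattice in dimension `p`: an additive subgroup of `ℤ^p`
containing `(2ℤ)^p` whose projection onto every coordinate is all of `ℤ`. -/
def IsStdIL (p : ℕ) (L : AddSubgroup (Fin p → ℤ)) : Prop :=
  (∀ x : Fin p → ℤ, (∀ k, (2 : ℤ) ∣ x k) → x ∈ L) ∧
  (∀ (k : Fin p) (z : ℤ), ∃ x ∈ L, x k = z)

/-- `B(𝓛,s,u) = {x + u : x ∈ 𝓛} ∩ ∏_k {0,1,…,s_k−1}`. -/
def latticeBox (p : ℕ) (L : AddSubgroup (Fin p → ℤ)) (s : Fin p → ℕ)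
    (u : Fin p → ℤ) : Set (Fin p → ℤ) :=
  {y | y - u ∈ L ∧ ∀ k, 0 ≤ y k ∧ y k < (s k : ℤ)}

/-- `m(𝓛,s,u)`, the cardinality of `B(𝓛,s,u)`. -/
noncomputable def latticeSize (p : ℕ) (L : AddSubgroup (Fin p → ℤ)) (s : Fin p → ℕ)
    (u : Fin p → ℤ) : ℕ :=
  (latticeBox p L s u).ncard

/-- The `i`-th smallest element (0-indexed) of a finite set of reals. -/
noncomputable def nthLevel (γ : Finset ℝ) (i : ℕ) : ℝ :=
  (γ.sort (· ≤ ·)).getD i 0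

/-- The interleaved lattice-based design
`D(𝓛,s,𝒴,u) = {(𝒴_{1(i_1)},…,𝒴_{p(i_p)}) : (i_1−1,…,i_p−1) ∈ B(𝓛,s,u)} ⊆ ℝ^p`. -/
noncomputable def design (p : ℕ) (L : AddSubgroup (Fin p → ℤ)) (s : Fin p → ℕ)
    (Y : Fin p → Finset ℝ) (u : Fin p → ℤ) : Set (EuclideanSpace ℝ (Fin p)) :=
  {v | ∃ y ∈ latticeBox p L s u, ∀ k, v k = nthLevel (Y k) (y k).toNat}

/-- `d*(γ)`: minimum gap between adjacent elements of `γ`. -/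
noncomputable def dstar (γ : Finset ℝ) : ℝ :=
  ⨅ i : Fin (γ.card - 1), (nthLevel γ (i.1 + 1) - nthLevel γ i.1)

/-- `d⁺(γ)`: minimum gap between elements two positions apart in `γ`. -/
noncomputable def dplus (γ : Finset ℝ) : ℝ :=
  ⨅ i : Fin (γ.card - 2), (nthLevel γ (i.1 + 2) - nthLevel γ i.1)

private lemma nthLevel_lt_nthLevel {γ : Finset ℝ} {i j : ℕ} (hij : i < j) (hj : j < γ.card) :
    nthLevel γ i < nthLevel γ j := by
  have hlen : (γ.sort (· ≤ ·)).length = γ.card := Finset.length_sort _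
  have hi' : i < (γ.sort (· ≤ ·)).length := by omega
  have hj' : j < (γ.sort (· ≤ ·)).length := by omega
  have hs := (Finset.sortedLT_sort γ).pairwise
  have := List.pairwise_iff_get.mp hs ⟨i, hi'⟩ ⟨j, hj'⟩ hij
  rw [nthLevel, nthLevel, List.getD_eq_getElem _ _ hi', List.getD_eq_getElem _ _ hj']
  simpa using this

private lemma nthLevel_mem {γ : Finset ℝ} {i : ℕ} (hi : i < γ.card) : nthLevel γ i ∈ γ := by
  have hlen : (γ.sort (· ≤ ·)).length = γ.card := Finset.length_sort _
  have hi' : i < (γ.sort (· ≤ ·)).length := by omega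
  rw [nthLevel, List.getD_eq_get _ _ ⟨i, hi'⟩]
  exact (Finset.mem_sort _).mp (List.get_mem _ _)

private lemma dstar_le_gap {γ : Finset ℝ} {i : ℕ} (hi : i < γ.card - 1) :
    dstar γ ≤ nthLevel γ (i + 1) - nthLevel γ i := by
  rw [dstar]
  exact ciInf_le (Set.Finite.bddBelow (Set.finite_range _)) (⟨i, hi⟩ : Fin (γ.card - 1))

private lemma dplus_le_gap {γ : Finset ℝ} {i : ℕ} (hi : i < γ.card - 2) :
    dplus γ ≤ nthLevel γ (i + 2) - nthLevel γ i := by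
  rw [dplus]
  exact ciInf_le (Set.Finite.bddBelow (Set.finite_range _)) (⟨i, hi⟩ : Fin (γ.card - 2))

private lemma sort_image_strictMono {s : ℕ} {f : ℕ → ℝ} (hf : StrictMono f) :
    ((Finset.range s).image f).sort (· ≤ ·) = (List.range s).map f := by
  refine (fun hp h1 h2 => List.Perm.eq_of_pairwise' h1 h2 hp) ?_ (Finset.pairwise_sort _ _) ?_
  · apply List.perm_of_nodup_nodup_toFinset_eq (Finset.sort_nodup _ _)
    · exact List.Nodup.map hf.injective List.nodup_range
    · rw [Finset.sort_toFinset]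
      ext x
      simp [List.mem_map]
  · refine List.Pairwise.imp (R := (· < ·)) (fun h => le_of_lt h) ?_
    rw [List.pairwise_map, List.pairwise_iff_get]
    intro a b hab
    simp only [List.get_eq_getElem, List.getElem_range]
    exact hf hab

private lemma nthLevel_image {s : ℕ} {f : ℕ → ℝ} (hf : StrictMono f) {i : ℕ} (hi : i < s) :
    nthLevel ((Finset.range s).image f) i = f i := by
  rw [nthLevel, sort_image_strictMono hf]
  have hl : ((List.range s).map f).length = s := by simp
  rw [List.getD_eq_get _ _ ⟨i, (by omega : i < ((List.range s).map f).length)⟩]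
  simp

private lemma card_image_strictMono {s : ℕ} {f : ℕ → ℝ} (hf : StrictMono f) :
    ((Finset.range s).image f).card = s := by
  rw [Finset.card_image_of_injective _ hf.injective, Finset.card_range]

/-- every size-`s` subset of `[0,w]` (`s ≥ 4` even) is dominated in both
`d*` and `d⁺` by the member `γ̃_{v₁}` of the family with `v₁ = d*(γ)`. -/
theorem stmt_12 (w : ℝ) (hw : 0 < w) (s : ℕ) (hs : 4 ≤ s) (heven : Even s)
    (γ : Finset ℝ) (hγ : ↑γ ⊆ Set.Icc (0 : ℝ) w) (hcard : γ.card = s) :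
    0 < dstar γ ∧ dstar γ ≤ w / ((s : ℝ) - 1) ∧
    dstar γ ≤
      dstar ((Finset.range s).image
        (fun i => (((i + 1) / 2 : ℕ) : ℝ) * dstar γ +
          ((((i + 2) / 2 : ℕ) : ℝ) - 1) * ((2 * w - (s : ℝ) * dstar γ) / ((s : ℝ) - 2)))) ∧
    dplus γ ≤
      dplus ((Finset.range s).image
        (fun i => (((i + 1) / 2 : ℕ) : ℝ) * dstar γ +
          ((((i + 2) / 2 : ℕ) : ℝ) - 1) * ((2 * w - (s : ℝ) * dstar γ) / ((s : ℝ) - 2)))) := by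
  obtain ⟨t, rfl⟩ := heven
  have ht : 2 ≤ t := by omega
  set v₁ := dstar γ with hv₁def
  set v₂ := (2 * w - ((t + t : ℕ) : ℝ) * v₁) / (((t + t : ℕ) : ℝ) - 2) with hv₂def
  set g : ℕ → ℝ := fun i => nthLevel γ i with hg
  have hsr : ((t + t : ℕ) : ℝ) = 2 * (t : ℝ) := by push_cast; ring
  have hs2 : (0 : ℝ) < ((t + t : ℕ) : ℝ) - 2 := by
    rw [hsr]
    have : (2 : ℝ) ≤ (t : ℝ) := by exact_mod_cast ht
    linarith
  -- each gap positive, each gap ≥ v₁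
  have hgap : ∀ i, i < t + t - 1 → 0 < g (i + 1) - g i := by
    intro i hi
    exact sub_pos.2 (nthLevel_lt_nthLevel (Nat.lt_succ_self i) (by omega))
  have hle : ∀ i, i < t + t - 1 → v₁ ≤ g (i + 1) - g i := by
    intro i hi
    exact dstar_le_gap (by omega)
  -- 0 < v₁
  haveI hne1 : Nonempty (Fin (γ.card - 1)) := ⟨⟨0, by omega⟩⟩
  have h1 : 0 < v₁ := by
    obtain ⟨i₀, hi₀⟩ := Finite.exists_min
      (fun i : Fin (γ.card - 1) => nthLevel γ (i.1 + 1) - nthLevel γ i.1)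
    have hfi₀ : 0 < nthLevel γ (i₀.1 + 1) - nthLevel γ i₀.1 :=
      hgap i₀.1 (by have := i₀.2; omega)
    exact lt_of_lt_of_le hfi₀ (le_ciInf hi₀)
  -- membership bounds
  have hmemIcc : ∀ i, i < t + t → g i ∈ Set.Icc (0 : ℝ) w := by
    intro i hi
    exact hγ (nthLevel_mem (by omega))
  have hg0 : (0 : ℝ) ≤ g 0 := (hmemIcc 0 (by omega)).1
  have hgtop : g (t + t - 1) ≤ w := (hmemIcc _ (by omega)).2
  -- telescoping for dstar bound
  have htel : ∑ i ∈ Finset.range (t + t - 1), (g (i + 1) - g i) = g (t + t - 1) - g 0 :=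
    Finset.sum_range_sub g (t + t - 1)
  have hsum1 : ((t + t - 1 : ℕ) : ℝ) * v₁ ≤ g (t + t - 1) - g 0 := by
    rw [← htel]
    have := Finset.card_nsmul_le_sum (Finset.range (t + t - 1)) (fun i => g (i + 1) - g i) v₁
      (fun i hi => hle i (Finset.mem_range.mp hi))
    simpa [nsmul_eq_mul] using this
  have hcast1 : ((t + t - 1 : ℕ) : ℝ) = 2 * (t : ℝ) - 1 := by
    have : ((t + t - 1 : ℕ) : ℝ) = ((t + t : ℕ) : ℝ) - 1 := by
      rw [Nat.cast_sub (by omega)]; simp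
    rw [this, hsr]
  have hkey1 : (2 * (t : ℝ) - 1) * v₁ ≤ w := by
    rw [← hcast1]; linarith [hsum1, hg0, hgtop]
  have h2 : v₁ ≤ w / (((t + t : ℕ) : ℝ) - 1) := by
    have h2t : (2:ℝ) ≤ (t:ℝ) := by exact_mod_cast ht
    rw [le_div_iff₀ (by rw [hsr]; linarith)]
    rw [hsr]; linarith
  -- v₁ ≤ v₂, 0 < v₂
  have h3 : v₁ ≤ v₂ := by
    rw [hv₂def, le_div_iff₀ hs2, hsr]
    have h2t : (2:ℝ) ≤ (t:ℝ) := by exact_mod_cast ht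
    nlinarith [hkey1, h1.le]
  have hv2pos : 0 < v₂ := lt_of_lt_of_le h1 h3
  -- the comparison set
  set f : ℕ → ℝ := fun i => (((i + 1) / 2 : ℕ) : ℝ) * v₁ +
      ((((i + 2) / 2 : ℕ) : ℝ) - 1) * v₂ with hfdef
  have hstep : ∀ i, f i < f (i + 1) := by
    intro i
    simp only [hfdef]
    rcases Nat.even_or_odd i with ⟨k, rfl⟩ | ⟨k, hk⟩
    · have e1 : (k + k + 1) / 2 = k := by omega
      have e2 : (k + k + 2) / 2 = k + 1 := by omega
      have e3 : (k + k + 1 + 1) / 2 = k + 1 := by omega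
      have e4 : (k + k + 1 + 2) / 2 = k + 1 := by omega
      simp only [e1, e2, e3, e4]
      push_cast
      linarith
    · subst hk
      have e1 : (2 * k + 1 + 1) / 2 = k + 1 := by omega
      have e2 : (2 * k + 1 + 2) / 2 = k + 1 := by omega
      have e3 : (2 * k + 1 + 1 + 1) / 2 = k + 1 := by omega
      have e4 : (2 * k + 1 + 1 + 2) / 2 = k + 2 := by omega
      simp only [e1, e2, e3, e4]
      push_cast
      linarith
  have hmono : StrictMono f := strictMono_nat_of_lt_succ hstep
  have hgapval : ∀ i : ℕ, v₁ ≤ f (i + 1) - f i := by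
    intro i
    simp only [hfdef]
    rcases Nat.even_or_odd i with ⟨k, rfl⟩ | ⟨k, hk⟩
    · have e1 : (k + k + 1) / 2 = k := by omega
      have e2 : (k + k + 2) / 2 = k + 1 := by omega
      have e3 : (k + k + 1 + 1) / 2 = k + 1 := by omega
      have e4 : (k + k + 1 + 2) / 2 = k + 1 := by omega
      simp only [e1, e2, e3, e4]
      push_cast
      linarith
    · subst hk
      have e1 : (2 * k + 1 + 1) / 2 = k + 1 := by omega
      have e2 : (2 * k + 1 + 2) / 2 = k + 1 := by omega
      have e3 : (2 * k + 1 + 1 + 1) / 2 = k + 1 := by omega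
      have e4 : (2 * k + 1 + 1 + 2) / 2 = k + 2 := by omega
      simp only [e1, e2, e3, e4]
      push_cast
      linarith
  have h2gap : ∀ i : ℕ, f (i + 2) - f i = v₁ + v₂ := by
    intro i
    simp only [hfdef]
    have e1 : (i + 2 + 1) / 2 = (i + 1) / 2 + 1 := by omega
    have e2 : (i + 2 + 2) / 2 = (i + 2) / 2 + 1 := by omega
    simp only [e1, e2]
    push_cast
    ring
  set T := (Finset.range (t + t)).image f with hT
  have hTcard : T.card = t + t := card_image_strictMono hmono
  have hTnth : ∀ i, i < t + t → nthLevel T i = f i := fun i hi => nthLevel_image hmono hi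
  -- dstar γ ≤ dstar T
  haveI hneT1 : Nonempty (Fin (T.card - 1)) := ⟨⟨0, by omega⟩⟩
  have h4 : v₁ ≤ dstar T := by
    rw [dstar]
    apply le_ciInf
    intro i
    have hi : i.1 < t + t - 1 := by have := i.2; omega
    rw [hTnth _ (by omega), hTnth _ (by omega)]
    exact hgapval i.1
  -- dplus γ ≤ v₁ + v₂
  have hdle : ∀ i, i < t + t - 2 → dplus γ ≤ g (i + 2) - g i := by
    intro i hi
    exact dplus_le_gap (by omega)
  have htel2 : ∑ j ∈ Finset.range (t - 1), (g (2 * (j + 1)) - g (2 * j)) =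
      g (2 * (t - 1)) - g 0 := Finset.sum_range_sub (fun j => g (2 * j)) (t - 1)
  have hsum2 : ((t - 1 : ℕ) : ℝ) * dplus γ ≤ g (2 * (t - 1)) - g 0 := by
    rw [← htel2]
    have := Finset.card_nsmul_le_sum (Finset.range (t - 1))
      (fun j => g (2 * (j + 1)) - g (2 * j)) (dplus γ)
      (fun j hj => by
        have hj' := Finset.mem_range.mp hj
        show dplus γ ≤ g (2 * (j + 1)) - g (2 * j)
        have he : 2 * (j + 1) = 2 * j + 2 := by ring
        rw [he]
        exact hdle (2 * j) (by omega))
    simpa [nsmul_eq_mul] using this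
  have hlast : v₁ ≤ g (t + t - 1) - g (t + t - 2) := by
    have := hle (t + t - 2) (by omega)
    have he : t + t - 2 + 1 = t + t - 1 := by omega
    rwa [he] at this
  have h2tm : 2 * (t - 1) = t + t - 2 := by omega
  have hcast2 : ((t - 1 : ℕ) : ℝ) = (t : ℝ) - 1 := by
    rw [Nat.cast_sub (by omega)]; simp
  have hkey2 : ((t : ℝ) - 1) * dplus γ + v₁ ≤ w := by
    rw [← hcast2]
    have h2' := hsum2
    rw [h2tm] at h2'
    linarith [hg0, hgtop, hlast]
  have h5 : dplus γ ≤ v₁ + v₂ := by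
    have hv2mul : v₂ * (((t + t : ℕ) : ℝ) - 2) = 2 * w - ((t + t : ℕ) : ℝ) * v₁ :=
      div_mul_cancel₀ _ (ne_of_gt hs2)
    have h2t : (2:ℝ) ≤ (t:ℝ) := by exact_mod_cast ht
    have hmul : dplus γ * (((t + t : ℕ) : ℝ) - 2) ≤ (v₁ + v₂) * (((t + t : ℕ) : ℝ) - 2) := by
      rw [add_mul, hv2mul, hsr]
      linarith [hkey2]
    exact le_of_mul_le_mul_right hmul hs2
  -- dplus γ ≤ dplus T
  haveI hneT2 : Nonempty (Fin (T.card - 2)) := ⟨⟨0, by omega⟩⟩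
  have h6 : dplus γ ≤ dplus T := by
    rw [dplus]
    apply le_ciInf
    intro i
    have hi : i.1 < t + t - 2 := by have := i.2; omega
    rw [hTnth _ (by omega), hTnth _ (by omega), h2gap]
    exact h5
  exact ⟨h1, h2, h4, h6⟩
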